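/- arXiv:2301.06573 — 2 statements merged into one kernel-verified Lean document; each statement's English description precedes it below -/
import Mathlib

section
/- Let n ≥ 3 and let Mₙ be the n×n integer matrix with Mᵢᵢ = −2, M_{i,i+1} = M_{i+1,i} = 1 for 1 ≤ i ≤ n−1, M_{1,n} = M_{n,1} = −1, and all other entries 0. Let K₃ = (2, 0, …, 0)ᵀ ∈ ℚⁿ. Then K₃ᵀ Mₙ⁻¹ K₃ = −n, where Mₙ⁻¹ is the inverse of Mₙ over ℚ. -/
open Matrix

/-- The n×n matrix (n ≥ 3) with diagonal entries −2, entries 1 between consecutive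
indices, entries −1 in the corners (1,n) and (n,1), and all other entries 0. -/
def cycMat (n : ℕ) : Matrix (Fin n) (Fin n) ℤ := fun i j =>
  if i = j then -2
  else if (i : ℕ) + 1 = (j : ℕ) ∨ (j : ℕ) + 1 = (i : ℕ) then 1
  else if ((i : ℕ) = 0 ∧ (j : ℕ) = n - 1) ∨ ((j : ℕ) = 0 ∧ (i : ℕ) = n - 1) then -1
  else 0

/-!
`Mₙ` is the second-difference operator with antiperiodic boundary conditions, and the
centred index vector `vᵢ = i - n/2` solves `Mₙ v = K₃`;
hence `K₃ᵀ Mₙ⁻¹ K₃ = K₃ ⬝ v = 2 v₀ = -n`.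
`Mₙ` is invertible because a kernel vector has vanishing second differences, so it is an
arithmetic progression `a + i d`, and the two boundary rows give `2a + (n - 2)d = 2a + nd = 0`.
-/

/-- Row `i` of `Mₙ` is the second difference at `i` of the antiperiodic extension of `f`,
`f (-1) = -f (n - 1)` and `f n = -f 0`. -/
theorem cycMat_mulVec_apply {n : ℕ} (hn : 3 ≤ n) (f : ℕ → ℚ) (i : Fin n) :
    ((cycMat n).map (Int.cast : ℤ → ℚ) *ᵥ fun j => f j) i =
      (if (i : ℕ) = 0 then -f (n - 1) else f (i - 1)) - 2 * f i +
        (if (i : ℕ) = n - 1 then -f 0 else f (i + 1)) := by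
  obtain ⟨i, hi⟩ := i
  let prev : Fin n := ⟨if i = 0 then n - 1 else i - 1, by split_ifs <;> omega⟩
  let next : Fin n := ⟨if i = n - 1 then 0 else i + 1, by split_ifs <;> omega⟩
  have hentry : ∀ j : Fin n, ((cycMat n ⟨i, hi⟩ j : ℤ) : ℚ) * f j =
      (if j = prev then (if i = 0 then -f (n - 1) else f (i - 1)) else 0) +
      (if j = ⟨i, hi⟩ then -2 * f i else 0) +
      (if j = next then (if i = n - 1 then -f 0 else f (i + 1)) else 0) := by
    rintro ⟨j, hj⟩
    simp only [cycMat, prev, next, Fin.mk.injEq]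
    split_ifs <;> subst_vars <;> first | omega | (push_cast; ring)
  simp only [mulVec, dotProduct, map_apply, hentry, Finset.sum_add_distrib,
    Finset.sum_ite_eq', Finset.mem_univ, if_true]
  ring

theorem eq_add_mul_of_second_difference_eq_zero {R : Type*} [CommRing R] {f : ℕ → R} {n : ℕ}
    (hf : ∀ k, k + 2 < n → f k - 2 * f (k + 1) + f (k + 2) = 0) :
    ∀ i < n, f i = f 0 + i * (f 1 - f 0)
  | 0, _ => by simp
  | 1, _ => by simp
  | k + 2, hk => by
    have h₀ := eq_add_mul_of_second_difference_eq_zero hf k (by omega)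
    have h₁ := eq_add_mul_of_second_difference_eq_zero hf (k + 1) (by omega)
    push_cast at h₁ ⊢
    linear_combination hf k hk - h₀ + 2 * h₁

theorem eq_zero_of_cycMat_mulVec_eq_zero {n : ℕ} (hn : 3 ≤ n) {w : Fin n → ℚ}
    (hw : ((cycMat n).map (Int.cast : ℤ → ℚ)) *ᵥ w = 0) : w = 0 := by
  set f : ℕ → ℚ := fun i => if h : i < n then w ⟨i, h⟩ else 0
  have hwf : w = fun j : Fin n => f j := by ext j; simp [f, j.isLt]
  have hrow (i : ℕ) (hi : i < n) := congrFun hw ⟨i, hi⟩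
  rw [hwf] at hrow
  simp only [cycMat_mulVec_apply hn] at hrow
  have hap := eq_add_mul_of_second_difference_eq_zero (f := f) (n := n) fun k hk => by
    simpa [show k + 1 ≠ n - 1 by omega] using hrow (k + 1) (by omega)
  have hfirst := hrow 0 (by omega)
  have hlast := hrow (n - 1) (by omega)
  simp only [show n - 1 ≠ 0 by omega, show 0 ≠ n - 1 by omega, if_true, if_false,
    Pi.zero_apply, show n - 1 - 1 = n - 2 by omega] at hfirst hlast
  have h1 := hap (n - 1) (by omega)
  have h2 := hap (n - 2) (by omega)
  rw [Nat.cast_sub (by omega)] at h1 h2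
  have hd : f 1 - f 0 = 0 := by push_cast at h1 h2; linarith
  have ha : f 0 = 0 := by rw [hd] at h1 h2; linarith
  ext j
  rw [hwf]
  change f j = 0
  rw [hap j j.isLt, hd, ha, mul_zero, add_zero]

theorem isUnit_cycMat_map {n : ℕ} (hn : 3 ≤ n) :
    IsUnit ((cycMat n).map (Int.cast : ℤ → ℚ)) := by
  rw [← mulVec_injective_iff_isUnit]
  intro u v huv
  rw [← sub_eq_zero]
  exact eq_zero_of_cycMat_mulVec_eq_zero hn (by rw [mulVec_sub, huv, sub_self])

theorem cycMat_mulVec_index_sub_half {n : ℕ} (hn : 3 ≤ n) :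
    (cycMat n).map (Int.cast : ℤ → ℚ) *ᵥ (fun j : Fin n => (j : ℚ) - n / 2) =
      fun i : Fin n => if (i : ℕ) = 0 then (2 : ℚ) else 0 := by
  ext ⟨i, hi⟩
  rw [cycMat_mulVec_apply hn (fun j : ℕ => (j : ℚ) - n / 2)]
  have hcast : ((n - 1 : ℕ) : ℚ) = n - 1 := by rw [Nat.cast_sub (by omega), Nat.cast_one]
  obtain rfl | h0 := eq_or_ne i 0
  · simp only [show 0 ≠ n - 1 by omega, if_true, if_false, hcast]
    push_cast
    ring
  obtain rfl | hlast := eq_or_ne i (n - 1)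
  · simp only [h0, if_true, if_false, hcast, show n - 1 - 1 = n - 2 by omega,
      Nat.cast_sub (show 2 ≤ n by omega)]
    push_cast
    ring
  · simp only [h0, hlast, if_false, Nat.cast_sub (show 1 ≤ i by omega)]
    push_cast
    ring

/-- For n ≥ 3 and K₃ = (2,0,…,0)ᵀ, K₃ᵀ Mₙ⁻¹ K₃ = −n over ℚ. -/
theorem stmt_14 (n : ℕ) (hn : 3 ≤ n) :
    (fun i : Fin n => if (i : ℕ) = 0 then (2 : ℚ) else 0) ⬝ᵥ
        ((cycMat n).map (Int.cast : ℤ → ℚ))⁻¹.mulVec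
          (fun i : Fin n => if (i : ℕ) = 0 then (2 : ℚ) else 0) = -(n : ℚ) := by
  obtain ⟨_⟩ := (isUnit_cycMat_map hn).nonempty_invertible
  rw [inv_mulVec_eq_vec (cycMat_mulVec_index_sub_half hn).symm, dotProduct,
    Finset.sum_eq_single ⟨0, by omega⟩
      (fun j _ hj => by rw [if_neg fun h => hj (Fin.ext h), zero_mul]) (by simp)]
  norm_num
  ring
end

section
/- Let n ≥ 3 and let Mₙ be the n×n integer matrix with Mᵢᵢ = −2, M_{i,i+1} = M_{i+1,i} = 1 for 1 ≤ i ≤ n−1, M_{1,n} = M_{n,1} = −1, and all other entries 0. Let K₂ = (2, 0, …, 0, 2)ᵀ ∈ ℚⁿ. Then K₂ᵀ Mₙ⁻¹ K₂ = −4. -/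
/-!
The row sums of `Mₙ` are `-2, 0, …, 0, -2`, so `Mₙ (-𝟙) = K₂`; once `Mₙ` is invertible,
`Mₙ⁻¹ K₂ = -𝟙` and `K₂ᵀ Mₙ⁻¹ K₂ = -(2 + 2)`.

Invertibility: the interior rows of `Mₙ v = 0` say that the second differences of `v` vanish,
so `v` is affine, `vₖ = a + k d`. The first and last rows then read `-2a - (n-2)d = 0` and
`-2a - nd = 0`, whose difference is `2d = 0`; hence `d = a = 0` as soon as `2 ≠ 0`.
-/

open Matrix

theorem Fintype.sum_eq_add_add {ι M : Type*} [Fintype ι] [DecidableEq ι] [AddCommMonoid M]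
    {f : ι → M} {a b c : ι} (hab : a ≠ b) (hac : a ≠ c) (hbc : b ≠ c)
    (h : ∀ j, j ≠ a → j ≠ b → j ≠ c → f j = 0) :
    ∑ j, f j = f a + f b + f c := by
  rw [← Finset.sum_subset (Finset.subset_univ {a, b, c}) fun j _ hj => by
      simp only [Finset.mem_insert, Finset.mem_singleton, not_or] at hj
      exact h j hj.1 hj.2.1 hj.2.2,
    Finset.sum_insert (by simp [hab, hac]), Finset.sum_pair hbc, add_assoc]

theorem eq_add_mul_of_second_diff_eq_zero {R : Type*} [CommRing R] {u : ℕ → R} {m : ℕ}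
    (h : ∀ k, k + 2 ≤ m → u k - 2 * u (k + 1) + u (k + 2) = 0) :
    ∀ k ≤ m, u k = u 0 + k * (u 1 - u 0) := by
  intro k hk
  induction k using Nat.twoStepInduction with
  | zero => simp
  | one => ring
  | more k ih₀ ih₁ =>
    have hk' := h k hk
    rw [ih₀ (by omega), ih₁ (by omega)] at hk'
    push_cast at hk' ⊢
    linear_combination hk'

namespace cycMat

variable {n : ℕ}

theorem apply_eq_zero {i j : Fin n} (h₀ : (i : ℕ) ≠ j) (h₁ : (i : ℕ) + 1 ≠ j)
    (h₂ : (j : ℕ) + 1 ≠ i) (h₃ : ¬((i : ℕ) = 0 ∧ (j : ℕ) = n - 1))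
    (h₄ : ¬((j : ℕ) = 0 ∧ (i : ℕ) = n - 1)) :
    cycMat n i j = 0 := by
  simp [cycMat, Fin.ext_iff, *]

variable {R : Type*} [CommRing R]

theorem mulVec_apply_first (hn : 3 ≤ n) (w : Fin n → R) (i : Fin n) (hi : (i : ℕ) = 0) :
    ((cycMat n).map (Int.cast : ℤ → R) *ᵥ w) i =
      -2 * w i + w ⟨1, by omega⟩ - w ⟨n - 1, by omega⟩ := by
  rw [mulVec, dotProduct, Fintype.sum_eq_add_add (a := i) (b := ⟨1, by omega⟩)
    (c := ⟨n - 1, by omega⟩) (Fin.ne_of_val_ne (by dsimp only; omega))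
    (Fin.ne_of_val_ne (by dsimp only; omega)) (Fin.ne_of_val_ne (by dsimp only; omega))
    fun j hja hjb hjc => by
      rw [map_apply, apply_eq_zero] <;> simp_all [Fin.ext_iff] <;> omega]
  simp [cycMat, Fin.ext_iff, hi, show 1 ≠ n - 1 by omega, show 0 ≠ n - 1 by omega]
  ring

theorem mulVec_apply_last (hn : 3 ≤ n) (w : Fin n → R) (i : Fin n) (hi : (i : ℕ) = n - 1) :
    ((cycMat n).map (Int.cast : ℤ → R) *ᵥ w) i =
      -w ⟨0, by omega⟩ + w ⟨n - 2, by omega⟩ - 2 * w i := by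
  rw [mulVec, dotProduct, Fintype.sum_eq_add_add (a := ⟨0, by omega⟩) (b := ⟨n - 2, by omega⟩)
    (c := i) (Fin.ne_of_val_ne (by dsimp only; omega))
    (Fin.ne_of_val_ne (by dsimp only; omega)) (Fin.ne_of_val_ne (by dsimp only; omega))
    fun j hja hjb hjc => by
      rw [map_apply, apply_eq_zero] <;> simp_all [Fin.ext_iff] <;> omega]
  simp [cycMat, Fin.ext_iff, hi, show n - 1 ≠ 0 by omega, show n - 2 + 1 = n - 1 by omega,
    show 1 ≠ n - 1 by omega, show n - 1 ≠ n - 2 by omega]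
  ring

theorem mulVec_apply_of_pos_of_lt (w : Fin n → R) (i : Fin n) (h₀ : 0 < (i : ℕ))
    (h₁ : (i : ℕ) < n - 1) :
    ((cycMat n).map (Int.cast : ℤ → R) *ᵥ w) i =
      w ⟨i - 1, by omega⟩ - 2 * w i + w ⟨i + 1, by omega⟩ := by
  rw [mulVec, dotProduct, Fintype.sum_eq_add_add (a := ⟨i - 1, by omega⟩) (b := i)
    (c := ⟨i + 1, by omega⟩) (Fin.ne_of_val_ne (by dsimp only; omega))
    (Fin.ne_of_val_ne (by dsimp only; omega)) (Fin.ne_of_val_ne (by dsimp only; omega))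
    fun j hja hjb hjc => by
      rw [map_apply, apply_eq_zero] <;> simp_all [Fin.ext_iff] <;> omega]
  simp [cycMat, Fin.ext_iff, show (i : ℕ) - 1 + 1 = i by omega, show (i : ℕ) ≠ i - 1 by omega]
  ring

theorem mulVec_const_neg_one (hn : 3 ≤ n) :
    (cycMat n).map (Int.cast : ℤ → R) *ᵥ (fun _ => -1) =
      fun i : Fin n => if (i : ℕ) = 0 ∨ (i : ℕ) = n - 1 then (2 : R) else 0 := by
  funext i
  by_cases h₀ : (i : ℕ) = 0
  · rw [mulVec_apply_first hn _ i h₀, if_pos (.inl h₀)]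
    ring
  by_cases h₁ : (i : ℕ) = n - 1
  · rw [mulVec_apply_last hn _ i h₁, if_pos (.inr h₁)]
    ring
  rw [mulVec_apply_of_pos_of_lt _ i (by omega) (by omega), if_neg (by tauto)]
  ring

theorem eq_zero_of_mulVec_eq_zero [NoZeroDivisors R] (h2 : (2 : R) ≠ 0) (hn : 3 ≤ n)
    {v : Fin n → R} (hv : (cycMat n).map (Int.cast : ℤ → R) *ᵥ v = 0) : v = 0 := by
  obtain ⟨m, rfl⟩ : ∃ m, n = m + 3 := ⟨n - 3, by omega⟩
  set u : ℕ → R := fun k => if h : k < m + 3 then v ⟨k, h⟩ else 0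
  have hvu : ∀ i, v i = u i := fun i => by simp [u]
  have affine := eq_add_mul_of_second_diff_eq_zero (u := u) (m := m + 2) fun k hk => by
    have row := congrFun hv ⟨k + 1, by omega⟩
    rw [mulVec_apply_of_pos_of_lt _ _ (by simp) (by simp; omega)] at row
    simpa [hvu] using row
  have first := congrFun hv 0
  rw [mulVec_apply_first hn _ _ rfl] at first
  have last := congrFun hv (Fin.last _)
  rw [mulVec_apply_last hn _ _ rfl] at last
  simp only [hvu, Fin.val_zero, Fin.val_last, Pi.zero_apply, show m + 3 - 1 = m + 2 by omega,
    show m + 3 - 2 = m + 1 by omega, affine (m + 1) (by omega), affine (m + 2) le_rfl] at first last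
  push_cast at first last
  have hd : u 1 - u 0 = 0 := (mul_eq_zero.1 (by linear_combination first - last)).resolve_left h2
  have ha : u 0 = 0 :=
    (mul_eq_zero.1 (by linear_combination -first - (m + 1 : R) * hd)).resolve_left h2
  funext i
  rw [hvu, affine i (by omega), hd, ha, Pi.zero_apply, mul_zero, add_zero]

theorem det_map_ne_zero [IsDomain R] (h2 : (2 : R) ≠ 0) (hn : 3 ≤ n) :
    ((cycMat n).map (Int.cast : ℤ → R)).det ≠ 0 := fun h =>
  let ⟨_, hv0, hv⟩ := exists_mulVec_eq_zero_iff.2 h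
  hv0 (eq_zero_of_mulVec_eq_zero h2 hn hv)

end cycMat

/-- For n ≥ 3 and K₂ = (2,0,…,0,2)ᵀ, K₂ᵀ Mₙ⁻¹ K₂ = −4 over ℚ. -/
theorem stmt_15 (n : ℕ) (hn : 3 ≤ n) :
    (fun i : Fin n => if (i : ℕ) = 0 ∨ (i : ℕ) = n - 1 then (2 : ℚ) else 0) ⬝ᵥ
        ((cycMat n).map (Int.cast : ℤ → ℚ))⁻¹.mulVec
          (fun i : Fin n => if (i : ℕ) = 0 ∨ (i : ℕ) = n - 1 then (2 : ℚ) else 0) = -4 := by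
  have : Invertible ((cycMat n).map (Int.cast : ℤ → ℚ)) :=
    invertibleOfIsUnitDet _ (isUnit_iff_ne_zero.2 (cycMat.det_map_ne_zero two_ne_zero hn))
  rw [inv_mulVec_eq_vec (cycMat.mulVec_const_neg_one hn).symm, dotProduct,
    Fintype.sum_eq_add ⟨0, by omega⟩ ⟨n - 1, by omega⟩ (Fin.ne_of_val_ne (by dsimp only; omega))
      fun j hj => by simp [Fin.ext_iff] at hj ⊢; omega]
  norm_num
end
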